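/- arXiv:2508.05749 — 4 statements merged into one kernel-verified Lean document; each statement's English description precedes it below -/
import Mathlib

section
/- Let H_C = diag(x_1 I_{n_1}, …, x_m I_{n_m}) be a diagonal matrix with m distinct eigenvalues x_1,…,x_m, and let H_M = J be the all-ones n×n matrix. Then the Lie algebra generated by iH_C and iH_M (under repeated commutators and real linear combinations) has dimension at most m² + 1. -/
/-!
Let `c` send each index to its block, so that `i H_C = diag(a ∘ c)` with `a = i x`, and `i J` is
the pull-back `f ∘ (c × c)` of the constant `m × m` matrix `f = i`. The real space
`ℝ · diag(a ∘ c) + {f ∘ (c × c) : f ∈ 𝔲(m)}` is closed under brackets: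
`(f ∘ (c × c)) (g ∘ (c × c)) = (f N g) ∘ (c × c)` with `N` the diagonal matrix of block sizes, so
`f N g - g N f ∈ 𝔲(m)`, and `[diag(a ∘ c), f ∘ (c × c)] = [diag a, f] ∘ (c × c)`. Its dimension is
at most `1 + dim 𝔲(m) = 1 + m²`, since multiplication by `i` embeds the skew-Hermitian matrices
into the Hermitian ones and the two together make up all complex `m × m` matrices.
-/

attribute [local instance] LieRing.ofAssociativeRing

open Matrix Module

section SkewAdjoint

theorem two_mul_finrank_skewAdjoint_le {A : Type*} [AddCommGroup A] [StarAddMonoid A]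
    [Module ℂ A] [StarModule ℂ A] [FiniteDimensional ℝ A] :
    2 * finrank ℝ (skewAdjoint.submodule ℝ A) ≤ finrank ℝ A := by
  have : Module.Finite ℝ (selfAdjoint A) :=
    inferInstanceAs (Module.Finite ℝ (selfAdjoint.submodule ℝ A))
  have : Module.Finite ℝ (skewAdjoint A) :=
    inferInstanceAs (Module.Finite ℝ (skewAdjoint.submodule ℝ A))
  have hsum := (StarModule.decomposeProdAdjoint ℝ A).finrank_eq
  rw [finrank_prod] at hsum
  have hle : finrank ℝ (skewAdjoint A) ≤ finrank ℝ (selfAdjoint A) :=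
    LinearMap.finrank_le_finrank_of_injective fun a b h => Subtype.ext <| by
      rw [← skewAdjoint.I_smul_neg_I a, ← skewAdjoint.I_smul_neg_I b, h]
  change 2 * finrank ℝ (skewAdjoint A) ≤ _
  omega

theorem Matrix.finrank_skewAdjoint_le (κ : Type*) [Fintype κ] :
    finrank ℝ (skewAdjoint.submodule ℝ (Matrix κ κ ℂ)) ≤ Fintype.card κ ^ 2 := by
  have := two_mul_finrank_skewAdjoint_le (A := Matrix κ κ ℂ)
  rw [finrank_matrix, Complex.finrank_real_complex] at this
  nlinarith

theorem skewAdjoint.mul_mul_sub_mul_mul_mem {A : Type*} [Ring A] [StarRing A] {f g n : A}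
    (hf : f ∈ skewAdjoint A) (hg : g ∈ skewAdjoint A) (hn : IsSelfAdjoint n) :
    f * n * g - g * n * f ∈ skewAdjoint A := by
  rw [skewAdjoint.mem_iff] at *
  simp only [star_sub, star_mul, hf, hg, hn.star_eq, neg_mul, mul_neg, neg_neg, mul_assoc]
  abel

theorem skewAdjoint.lie_mem {A : Type*} [Ring A] [StarRing A] {f g : A}
    (hf : f ∈ skewAdjoint A) (hg : g ∈ skewAdjoint A) : ⁅f, g⁆ ∈ skewAdjoint A := by
  simpa [Ring.lie_def] using skewAdjoint.mul_mul_sub_mul_mul_mem hf hg (IsSelfAdjoint.one A)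

theorem Matrix.diagonal_mem_skewAdjoint {κ α : Type*} [DecidableEq κ] [AddCommGroup α]
    [StarAddMonoid α] {a : κ → α} (ha : a ∈ skewAdjoint (κ → α)) :
    diagonal a ∈ skewAdjoint (Matrix κ κ α) := by
  rw [skewAdjoint.mem_iff] at *
  rw [star_eq_conjTranspose, diagonal_conjTranspose, ha, diagonal_neg]
  rfl

end SkewAdjoint

namespace Matrix

def submatrixLinearMap {l m n o : Type*} (R : Type*) {α : Type*} [Semiring R]
    [AddCommMonoid α] [Module R α] (r : l → m) (c : o → n) :
    Matrix m n α →ₗ[R] Matrix l o α where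
  toFun f := f.submatrix r c
  map_add' _ _ := rfl
  map_smul' _ _ := rfl

section Pullback

variable {ι κ R : Type*} [Fintype ι] [DecidableEq κ] (c : ι → κ)

def fiberCardMatrix [CommSemiring R] : Matrix κ κ R :=
  diagonal fun b => (Finset.univ.filter (c · = b)).card

theorem isSelfAdjoint_fiberCardMatrix [CommSemiring R] [StarRing R] :
    IsSelfAdjoint (fiberCardMatrix c : Matrix κ κ R) := by
  simp [IsSelfAdjoint, fiberCardMatrix, star_eq_conjTranspose, diagonal_conjTranspose]

variable [Fintype κ]

theorem submatrix_mul_submatrix [CommSemiring R] (f g : Matrix κ κ R) :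
    f.submatrix c c * g.submatrix c c = (f * fiberCardMatrix c * g).submatrix c c := by
  ext i j
  rw [submatrix_apply, mul_apply, mul_apply]
  simp only [submatrix_apply, fiberCardMatrix, mul_diagonal]
  rw [← Finset.sum_fiberwise' Finset.univ c fun b => f (c i) b * g b (c j)]
  refine Finset.sum_congr rfl fun b _ => ?_
  rw [Finset.sum_const, nsmul_eq_mul]
  ring

theorem diagonal_comp_mul_submatrix [CommSemiring R] [DecidableEq ι] (a : κ → R)
    (f : Matrix κ κ R) :
    diagonal (a ∘ c) * f.submatrix c c = (diagonal a * f).submatrix c c := by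
  ext i j
  simp [diagonal_mul]

theorem submatrix_mul_diagonal_comp [CommSemiring R] [DecidableEq ι] (a : κ → R)
    (f : Matrix κ κ R) :
    f.submatrix c c * diagonal (a ∘ c) = (f * diagonal a).submatrix c c := by
  ext i j
  simp [mul_diagonal]

theorem lie_submatrix_submatrix [CommRing R] (f g : Matrix κ κ R) :
    ⁅f.submatrix c c, g.submatrix c c⁆ =
      (f * fiberCardMatrix c * g - g * fiberCardMatrix c * f).submatrix c c := by
  rw [Ring.lie_def, submatrix_mul_submatrix, submatrix_mul_submatrix]
  rfl

theorem lie_diagonal_comp_submatrix [CommRing R] [DecidableEq ι] (a : κ → R)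
    (f : Matrix κ κ R) :
    ⁅diagonal (a ∘ c), f.submatrix c c⁆ = ⁅diagonal a, f⁆.submatrix c c := by
  rw [Ring.lie_def, Ring.lie_def, diagonal_comp_mul_submatrix, submatrix_mul_diagonal_comp]
  rfl

end Pullback

end Matrix

section BlockLieSubalgebra

variable {ι κ : Type*} [Fintype ι] [DecidableEq ι] [Fintype κ] [DecidableEq κ] (c : ι → κ)
  {a : κ → ℂ} (ha : a ∈ skewAdjoint (κ → ℂ))

def blockLieSubalgebra : LieSubalgebra ℝ (Matrix ι ι ℂ) where
  carrier := {M | ∃ t : ℝ, ∃ f ∈ skewAdjoint (Matrix κ κ ℂ),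
    M = t • diagonal (a ∘ c) + f.submatrix c c}
  add_mem' := by
    rintro _ _ ⟨t, f, hf, rfl⟩ ⟨s, g, hg, rfl⟩
    refine ⟨t + s, f + g, add_mem hf hg, ?_⟩
    rw [add_smul]
    change _ = _ + (f.submatrix c c + g.submatrix c c)
    abel
  zero_mem' := ⟨0, 0, zero_mem _, by simp⟩
  smul_mem' := by
    rintro r _ ⟨t, f, hf, rfl⟩
    exact ⟨r * t, r • f, skewAdjoint.smul_mem r hf, by rw [smul_add, smul_smul]; rfl⟩
  lie_mem' := by
    rintro _ _ ⟨t, f, hf, rfl⟩ ⟨s, g, hg, rfl⟩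
    have hD := diagonal_mem_skewAdjoint ha
    refine ⟨0, t • ⁅diagonal a, g⁆ - s • ⁅diagonal a, f⁆ +
      (f * fiberCardMatrix c * g - g * fiberCardMatrix c * f), ?_, ?_⟩
    · refine add_mem (sub_mem ?_ ?_) ?_
      · exact skewAdjoint.smul_mem t (skewAdjoint.lie_mem hD hg)
      · exact skewAdjoint.smul_mem s (skewAdjoint.lie_mem hD hf)
      · exact skewAdjoint.mul_mul_sub_mul_mul_mem hf hg (isSelfAdjoint_fiberCardMatrix c)
    · simp only [zero_smul, zero_add, add_lie, lie_add, smul_lie, lie_smul, lie_self, smul_zero]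
      rw [← lie_skew (f.submatrix c c), lie_diagonal_comp_submatrix, lie_diagonal_comp_submatrix,
        lie_submatrix_submatrix]
      ext i j
      simp only [Matrix.add_apply, Matrix.sub_apply, Matrix.smul_apply, Matrix.neg_apply,
        submatrix_apply]
      module

theorem finrank_blockLieSubalgebra_le :
    finrank ℝ (blockLieSubalgebra c ha) ≤ Fintype.card κ ^ 2 + 1 := by
  set S := (skewAdjoint.submodule ℝ (Matrix κ κ ℂ)).map (submatrixLinearMap ℝ c c)
  have hle : (blockLieSubalgebra c ha).toSubmodule ≤ (ℝ ∙ diagonal (a ∘ c)) ⊔ S := by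
    rintro _ ⟨t, f, hf, rfl⟩
    exact Submodule.add_mem_sup (Submodule.mem_span_singleton.2 ⟨t, rfl⟩)
      (Submodule.mem_map_of_mem hf)
  calc finrank ℝ (blockLieSubalgebra c ha)
      ≤ finrank ℝ ↥((ℝ ∙ diagonal (a ∘ c)) ⊔ S) := Submodule.finrank_mono hle
    _ ≤ finrank ℝ (ℝ ∙ diagonal (a ∘ c)) + finrank ℝ S :=
      Submodule.finrank_add_le_finrank_add_finrank _ _
    _ ≤ 1 + Fintype.card κ ^ 2 :=
      add_le_add ((finrank_span_le_card _).trans_eq (by simp))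
        ((Submodule.finrank_map_le _ _).trans (finrank_skewAdjoint_le κ))
    _ = Fintype.card κ ^ 2 + 1 := add_comm _ _

end BlockLieSubalgebra

theorem qwoa_dla_dim_le_general {n m : ℕ} (c : Fin n → Fin m)
    (x : Fin m → ℝ) :
    Module.finrank ℝ
      (LieSubalgebra.lieSpan ℝ (Matrix (Fin n) (Fin n) ℂ)
        {Complex.I • Matrix.diagonal (fun i => (x (c i) : ℂ)),
         Complex.I • Matrix.of (fun _ _ => (1 : ℂ))}) ≤ m ^ 2 + 1 := by
  have ha : (fun b => Complex.I * x b) ∈ skewAdjoint (Fin m → ℂ) := by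
    ext b
    simp
  have hgen : LieSubalgebra.lieSpan ℝ (Matrix (Fin n) (Fin n) ℂ)
      {Complex.I • Matrix.diagonal (fun i => (x (c i) : ℂ)),
       Complex.I • Matrix.of (fun _ _ => (1 : ℂ))} ≤ blockLieSubalgebra c ha := by
    rw [LieSubalgebra.lieSpan_le, Set.insert_subset_iff, Set.singleton_subset_iff]
    constructor
    · exact ⟨1, 0, zero_mem _, by ext i j; simp [diagonal_apply]⟩
    · refine ⟨0, of fun _ _ => Complex.I, ?_, by ext i j; simp⟩
      ext b b'
      simp
  calc _ ≤ finrank ℝ (blockLieSubalgebra c ha) := Submodule.finrank_mono hgen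
    _ ≤ m ^ 2 + 1 := by simpa using finrank_blockLieSubalgebra_le c ha

/-- The Lie algebra (over ℝ, inside the `n × n` complex matrices) generated by
`i·H_C` and `i·H_M`, where `H_C = diag(x₁ I_{n₁}, …, x_m I_{n_m})` has `m` pairwise
distinct eigenvalues and `H_M = J` is the all-ones matrix, has dimension at most `m² + 1`. -/
theorem qwoa_dla_dim_le {n m : ℕ} (c : Fin n → Fin m) (hc : Function.Surjective c)
    (x : Fin m → ℝ) (hx : Function.Injective x) :
    Module.finrank ℝ
      (LieSubalgebra.lieSpan ℝ (Matrix (Fin n) (Fin n) ℂ)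
        {Complex.I • Matrix.diagonal (fun i => (x (c i) : ℂ)),
         Complex.I • Matrix.of (fun _ _ => (1 : ℂ))}) ≤ m ^ 2 + 1 :=
  qwoa_dla_dim_le_general c x
end

section
/- For the unstructured search problem with exactly one marked element out of N ≥ 2 elements, the Lie algebra generated by iH_C and iH_M has dimension exactly 4, where H_C is the diagonal projector onto the marked element and H_M is the N×N all-ones matrix. -/
/-! With `v` the marked basis vector and `u` the all-ones vector, `iH_C = i vvᵀ` and
`iH_M = i uuᵀ` lie in the real span of `i vvᵀ, i uuᵀ, uvᵀ - vuᵀ, i (vuᵀ + uvᵀ)`, the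
skew-Hermitian operators supported on `span {v, u}` (a copy of `𝔲(2)`). Products of rank-one
matrices only involve the Gram entries `v ⬝ v = v ⬝ u = 1` and `u ⬝ u = N`, so this span is
closed under commutators. The third element is `[iH_C, iH_M]` and the fourth is
`2 iH_C - [iH_C, [iH_C, iH_M]]`, so the span is the generated Lie algebra; for `N ≥ 2` the four
matrices are linearly independent. -/

attribute [local instance 100] LieRing.ofAssociativeRing

open Matrix Submodule

theorem LieSubalgebra.finrank_toSubmodule {R L : Type*} [CommRing R] [LieRing L]
    [LieAlgebra R L] (K : LieSubalgebra R L) :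
    Module.finrank R (K : Submodule R L) = Module.finrank R K :=
  rfl

theorem LieSubalgebra.coe_lieSpan_range_eq_span_of_lie_mem_span {R L ι : Type*} [CommRing R]
    [LieRing L] [LieAlgebra R L] [LinearOrder ι] {f : ι → L}
    (hf : ∀ i j, i < j → ⁅f i, f j⁆ ∈ span R (Set.range f)) :
    (lieSpan R L (Set.range f) : Submodule R L) = span R (Set.range f) := by
  have hclosed : ∀ {x y}, x ∈ span R (Set.range f) → y ∈ span R (Set.range f) →
      ⁅x, y⁆ ∈ span R (Set.range f) := by
    intro x y hx hy
    induction hx, hy using span_induction₂ with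
    | mem_mem x y hx hy =>
      obtain ⟨i, rfl⟩ := hx
      obtain ⟨j, rfl⟩ := hy
      rcases lt_trichotomy i j with hij | rfl | hji
      · exact hf i j hij
      · simp
      · rw [← lie_skew]
        exact neg_mem (hf j i hji)
    | zero_left y hy => simp
    | zero_right x hx => simp
    | add_left x y z _ _ _ hx hy => simp [add_mem hx hy]
    | add_right x y z _ _ _ hx hy => simp [add_mem hx hy]
    | smul_left r x y _ _ h => simp [smul_mem _ r h]
    | smul_right r x y _ _ h => simp [smul_mem _ r h]
  refine le_antisymm ?_ submodule_span_le_lieSpan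
  change _ ≤ ({ span R (Set.range f) with lie_mem' := hclosed } : LieSubalgebra R L)
  rw [lieSpan_le]
  exact subset_span

theorem diagonal_ite_eq_vecMulVec_single {ι α : Type*} [DecidableEq ι] [MulZeroOneClass α]
    (m : ι) :
    diagonal (fun i => if i = m then (1 : α) else 0) =
      vecMulVec (Pi.single m 1) (Pi.single m 1) := by
  ext i j
  by_cases hij : i = j <;> by_cases him : i = m <;> simp_all [vecMulVec_apply, Pi.single_apply]

theorem of_const_one_eq_vecMulVec_one {ι α : Type*} [MulOneClass α] :
    Matrix.of (fun _ _ : ι => (1 : α)) = vecMulVec 1 1 := by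
  ext i j
  simp [vecMulVec_apply]

noncomputable def skewBasis {ι : Type*} (v u : ι → ℂ) : Fin 4 → Matrix ι ι ℂ :=
  ![Complex.I • vecMulVec v v, Complex.I • vecMulVec u u, vecMulVec u v - vecMulVec v u,
    Complex.I • (vecMulVec v u + vecMulVec u v)]

section Brackets

variable {ι : Type*} [Fintype ι] [DecidableEq ι] {v u : ι → ℂ} {n : ℝ}

theorem lie_skewBasis_zero_one (hvu : v ⬝ᵥ u = 1) :
    ⁅skewBasis v u 0, skewBasis v u 1⁆ = skewBasis v u 2 := by
  have huv : u ⬝ᵥ v = 1 := by rw [dotProduct_comm, hvu]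
  simp only [skewBasis, Ring.lie_def, Matrix.cons_val, smul_mul_assoc, mul_smul_comm,
    vecMulVec_mul_vecMulVec, hvu, huv, one_smul, smul_add]
  match_scalars <;> simp

theorem lie_skewBasis_zero_two (hvv : v ⬝ᵥ v = 1) (hvu : v ⬝ᵥ u = 1) :
    ⁅skewBasis v u 0, skewBasis v u 2⁆ = (2 : ℝ) • skewBasis v u 0 - skewBasis v u 3 := by
  have huv : u ⬝ᵥ v = 1 := by rw [dotProduct_comm, hvu]
  simp only [skewBasis, Ring.lie_def, Matrix.cons_val, smul_mul_assoc, mul_smul_comm,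
    vecMulVec_mul_vecMulVec, hvv, hvu, huv, mul_sub, sub_mul, one_smul, smul_add, smul_sub]
  match_scalars <;> simp [Complex.ext_iff]; ring

theorem lie_skewBasis_zero_three (hvv : v ⬝ᵥ v = 1) (hvu : v ⬝ᵥ u = 1) :
    ⁅skewBasis v u 0, skewBasis v u 3⁆ = skewBasis v u 2 := by
  have huv : u ⬝ᵥ v = 1 := by rw [dotProduct_comm, hvu]
  simp only [skewBasis, Ring.lie_def, Matrix.cons_val, smul_mul_assoc, mul_smul_comm,
    vecMulVec_mul_vecMulVec, hvv, hvu, huv, mul_add, add_mul, one_smul, smul_add]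
  match_scalars <;> simp

theorem lie_skewBasis_one_two (hvu : v ⬝ᵥ u = 1) (huu : u ⬝ᵥ u = n) :
    ⁅skewBasis v u 1, skewBasis v u 2⁆ =
      n • skewBasis v u 3 - (2 : ℝ) • skewBasis v u 1 := by
  have huv : u ⬝ᵥ v = 1 := by rw [dotProduct_comm, hvu]
  simp only [skewBasis, Ring.lie_def, Matrix.cons_val, smul_mul_assoc, mul_smul_comm,
    vecMulVec_mul_vecMulVec, huu, hvu, huv, mul_sub, sub_mul, one_smul, vecMulVec_smul,
    smul_add, smul_sub]
  match_scalars <;> simp [Complex.ext_iff]; ring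

theorem lie_skewBasis_one_three (hvu : v ⬝ᵥ u = 1) (huu : u ⬝ᵥ u = n) :
    ⁅skewBasis v u 1, skewBasis v u 3⁆ = -(n • skewBasis v u 2) := by
  have huv : u ⬝ᵥ v = 1 := by rw [dotProduct_comm, hvu]
  simp only [skewBasis, Ring.lie_def, Matrix.cons_val, smul_mul_assoc, mul_smul_comm,
    vecMulVec_mul_vecMulVec, huu, hvu, huv, mul_add, add_mul, one_smul, vecMulVec_smul,
    smul_add, smul_sub]
  match_scalars <;> simp [Complex.ext_iff]

theorem lie_skewBasis_two_three (hvv : v ⬝ᵥ v = 1) (hvu : v ⬝ᵥ u = 1)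
    (huu : u ⬝ᵥ u = n) :
    ⁅skewBasis v u 2, skewBasis v u 3⁆ =
      (2 : ℝ) • skewBasis v u 1 - (2 * n) • skewBasis v u 0 := by
  have huv : u ⬝ᵥ v = 1 := by rw [dotProduct_comm, hvu]
  simp only [skewBasis, Ring.lie_def, Matrix.cons_val, smul_mul_assoc, mul_smul_comm,
    vecMulVec_mul_vecMulVec, hvv, hvu, huv, huu, mul_add, add_mul, mul_sub, sub_mul, one_smul,
    vecMulVec_smul, smul_add, smul_sub]
  match_scalars <;> simp [Complex.ext_iff] <;> ring

theorem lie_skewBasis_mem_span (hvv : v ⬝ᵥ v = 1) (hvu : v ⬝ᵥ u = 1) (huu : u ⬝ᵥ u = n)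
    (i j : Fin 4) (hij : i < j) :
    ⁅skewBasis v u i, skewBasis v u j⁆ ∈ span ℝ (Set.range (skewBasis v u)) := by
  have mem k : skewBasis v u k ∈ span ℝ (Set.range (skewBasis v u)) := subset_span ⟨k, rfl⟩
  fin_cases i <;> fin_cases j <;>
    simp only [Fin.reduceFinMk] at hij ⊢ <;> try omega
  · rw [lie_skewBasis_zero_one hvu]
    exact mem 2
  · rw [lie_skewBasis_zero_two hvv hvu]
    exact sub_mem (smul_mem _ _ (mem 0)) (mem 3)
  · rw [lie_skewBasis_zero_three hvv hvu]
    exact mem 2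
  · rw [lie_skewBasis_one_two hvu huu]
    exact sub_mem (smul_mem _ _ (mem 3)) (smul_mem _ _ (mem 1))
  · rw [lie_skewBasis_one_three hvu huu]
    exact neg_mem (smul_mem _ _ (mem 2))
  · rw [lie_skewBasis_two_three hvv hvu huu]
    exact sub_mem (smul_mem _ _ (mem 1)) (smul_mem _ _ (mem 0))

theorem coe_lieSpan_skewBasis_eq_span (hvv : v ⬝ᵥ v = 1) (hvu : v ⬝ᵥ u = 1)
    (huu : u ⬝ᵥ u = n) :
    (LieSubalgebra.lieSpan ℝ _ {Complex.I • vecMulVec v v, Complex.I • vecMulVec u u} :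
      Submodule ℝ (Matrix ι ι ℂ)) = span ℝ (Set.range (skewBasis v u)) := by
  rw [← LieSubalgebra.coe_lieSpan_range_eq_span_of_lie_mem_span
    (lie_skewBasis_mem_span hvv hvu huu)]
  congr 1
  set K := LieSubalgebra.lieSpan ℝ (Matrix ι ι ℂ)
    {Complex.I • vecMulVec v v, Complex.I • vecMulVec u u}
  have h0 : skewBasis v u 0 ∈ K := LieSubalgebra.subset_lieSpan (Set.mem_insert _ _)
  have h1 : skewBasis v u 1 ∈ K := LieSubalgebra.subset_lieSpan (Set.mem_insert_of_mem _ rfl)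
  have h2 : skewBasis v u 2 ∈ K := lie_skewBasis_zero_one hvu ▸ K.lie_mem h0 h1
  have h3 : skewBasis v u 3 ∈ K := by
    have h3_eq : skewBasis v u 3 =
        (2 : ℝ) • skewBasis v u 0 - ⁅skewBasis v u 0, skewBasis v u 2⁆ := by
      rw [lie_skewBasis_zero_two hvv hvu, sub_sub_cancel]
    exact h3_eq ▸ sub_mem (K.smul_mem _ h0) (K.lie_mem h0 h2)
  refine le_antisymm (LieSubalgebra.lieSpan_mono ?_) (LieSubalgebra.lieSpan_le.2 ?_)
  · rintro _ (rfl | rfl)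
    exacts [⟨0, rfl⟩, ⟨1, rfl⟩]
  · rw [Set.range_subset_iff]
    intro k
    fin_cases k
    exacts [h0, h1, h2, h3]

end Brackets

theorem linearIndependent_skewBasis_single_one {ι : Type*} [DecidableEq ι] {m₀ m₁ : ι}
    (h : m₁ ≠ m₀) :
    LinearIndependent ℝ (skewBasis (Pi.single m₀ 1) (1 : ι → ℂ)) := by
  rw [Fintype.linearIndependent_iff]
  intro g hg
  have entry p q : ∑ k, (g k : ℂ) * skewBasis (Pi.single m₀ 1) 1 k p q = 0 := by
    simpa [Matrix.sum_apply, Complex.real_smul] using congrFun₂ hg p q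
  have hg1 : g 1 = 0 := by
    simpa [Fin.sum_univ_four, skewBasis, vecMulVec_apply, h] using entry m₁ m₁
  have hg23 : g 2 = 0 ∧ g 3 = 0 := by
    simpa [Fin.sum_univ_four, skewBasis, vecMulVec_apply, h, hg1, Complex.ext_iff] using
      entry m₀ m₁
  have hg0 : g 0 = 0 := by
    simpa [Fin.sum_univ_four, skewBasis, vecMulVec_apply, hg1, hg23.2] using entry m₀ m₀
  intro k
  fin_cases k
  exacts [hg0, hg1, hg23.1, hg23.2]

/-- For unstructured search with exactly one marked element out of `N ≥ 2`,
the Lie algebra generated by `i·H_C` (diagonal projector onto the marked element)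
and `i·H_M` (all-ones matrix) has dimension exactly 4. -/
theorem qwoa_search_dla_one_marked {N : ℕ} (hN : 2 ≤ N) (m₀ : Fin N) :
    Module.finrank ℝ
      (LieSubalgebra.lieSpan ℝ (Matrix (Fin N) (Fin N) ℂ)
        {Complex.I • Matrix.diagonal (fun i => if i = m₀ then (1 : ℂ) else 0),
         Complex.I • Matrix.of (fun _ _ => (1 : ℂ))}) = 4 := by
  obtain ⟨m₁, hm₁⟩ := Fintype.exists_ne_of_one_lt_card (by rwa [Fintype.card_fin]) m₀
  have hvv : Pi.single m₀ 1 ⬝ᵥ Pi.single m₀ 1 = (1 : ℂ) := by simp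
  have hvu : Pi.single m₀ 1 ⬝ᵥ 1 = (1 : ℂ) := by simp
  have huu : (1 : Fin N → ℂ) ⬝ᵥ 1 = (N : ℝ) := by simp
  rw [diagonal_ite_eq_vecMulVec_single, of_const_one_eq_vecMulVec_one,
    ← LieSubalgebra.finrank_toSubmodule, coe_lieSpan_skewBasis_eq_span hvv hvu huu,
    finrank_span_eq_card (linearIndependent_skewBasis_single_one hm₁), Fintype.card_fin]
end

section
/- For the unstructured search problem with 1 < |M| < N marked elements out of N, the Lie algebra generated by iH_C and iH_M has dimension exactly 5, where H_C is the diagonal projector onto the marked set M and H_M is the N×N all-ones matrix. -/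
/-!
Let `u` be the indicator vector of `M` and `𝟙` the all-ones vector, so `H_C = diag u` and
`H_M = 𝟙 𝟙ᵀ`. Since `diag u` sends both `u` and `𝟙` to `u`, and `(a bᵀ) (c dᵀ) = (b ⬝ c) a dᵀ`
with `u ⬝ 𝟙 = |M|` and `𝟙 ⬝ 𝟙 = N`, bracketing `iH_C` or `iH_M` with any of
`iH_C, iH_M, i u uᵀ, i (u 𝟙ᵀ + 𝟙 uᵀ), u 𝟙ᵀ - 𝟙 uᵀ` stays in their real span. Conversely the last
three are obtained from `[iH_C, iH_M]`, `[iH_M, u 𝟙ᵀ - 𝟙 uᵀ]` and `[iH_C, u 𝟙ᵀ - 𝟙 uᵀ]`, so this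
span is the generated Lie algebra. Its five spanning matrices are linearly independent once `M`
contains two indices `j₀ ≠ j₁` and misses an index `k`: look at the entries at `(j₀, j₀)`,
`(j₀, j₁)`, `(k, k)` and `(j₀, k)`.
-/

attribute [local instance 100] LieRing.ofAssociativeRing

section LieSpan

variable {R L : Type*} [CommRing R] [LieRing L] [LieAlgebra R L]

def Submodule.lieNormalizer (V : Submodule R L) : LieSubalgebra R L where
  carrier := {x | ∀ v ∈ V, ⁅x, v⁆ ∈ V}
  zero_mem' := by simp
  add_mem' hx hy v hv := by rw [add_lie]; exact add_mem (hx v hv) (hy v hv)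
  smul_mem' r x hx v hv := by rw [smul_lie]; exact V.smul_mem r (hx v hv)
  lie_mem' hx hy v hv := by rw [lie_lie]; exact sub_mem (hx _ (hy v hv)) (hy _ (hx v hv))

/-- It suffices to bracket the generators `s` with the spanning set `t`: since `span t` lies in
the generated algebra, which normalizes `span t`, the span is closed under brackets. -/
theorem LieSubalgebra.toSubmodule_lieSpan_eq_span {s t : Set L} (hst : s ⊆ Submodule.span R t)
    (hts : t ⊆ lieSpan R L s) (hbr : ∀ x ∈ s, ∀ y ∈ t, ⁅x, y⁆ ∈ Submodule.span R t) :
    (lieSpan R L s).toSubmodule = Submodule.span R t := by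
  set V := Submodule.span R t
  have hV : V ≤ (lieSpan R L s).toSubmodule := Submodule.span_le.mpr hts
  have hnorm : lieSpan R L s ≤ V.lieNormalizer := by
    refine lieSpan_le.mpr fun x hx => ?_
    have : V ≤ V.comap (LieAlgebra.ad R L x) := Submodule.span_le.mpr fun y hy => hbr x hx y hy
    exact fun v hv => this hv
  let K : LieSubalgebra R L := { V with lie_mem' := fun hx hy => hnorm (hV hx) _ hy }
  exact le_antisymm (show lieSpan R L s ≤ K from lieSpan_le.mpr hst) hV

end LieSpan

open Matrix Complex

section Search

variable {n : Type*} [Fintype n] [DecidableEq n] (M : Finset n)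

def markVec (M : Finset n) : n → ℂ := fun i => if i ∈ M then 1 else 0

omit [Fintype n] in
theorem markVec_mul_self : markVec M * markVec M = markVec M := by
  ext i; by_cases h : i ∈ M <;> simp [markVec, h]

theorem markVec_dotProduct_one : markVec M ⬝ᵥ 1 = M.card := by
  simp [markVec, dotProduct, Finset.sum_ite_mem]

theorem one_dotProduct_markVec : 1 ⬝ᵥ markVec M = M.card := by
  rw [dotProduct_comm, markVec_dotProduct_one]

theorem diagonal_markVec_mul_vecMulVec (v w : n → ℂ) :
    diagonal (markVec M) * vecMulVec v w = vecMulVec (markVec M * v) w := by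
  rw [mul_vecMulVec]; congr 1; ext i; simp [mulVec_diagonal]

theorem vecMulVec_mul_diagonal_markVec (v w : n → ℂ) :
    vecMulVec v w * diagonal (markVec M) = vecMulVec v (w * markVec M) := by
  rw [vecMulVec_mul]; congr 1; ext i; simp [vecMul_diagonal]

def costGen (M : Finset n) : Matrix n n ℂ := I • diagonal (markVec M)

def mixerGen (n : Type*) : Matrix n n ℂ := I • of fun _ _ => 1

def markedProj (M : Finset n) : Matrix n n ℂ := I • vecMulVec (markVec M) (markVec M)

def symGen (M : Finset n) : Matrix n n ℂ :=
  I • (vecMulVec (markVec M) 1 + vecMulVec 1 (markVec M))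

def antiGen (M : Finset n) : Matrix n n ℂ := vecMulVec (markVec M) 1 - vecMulVec 1 (markVec M)

def searchBasis (M : Finset n) : Fin 5 → Matrix n n ℂ :=
  ![costGen M, mixerGen n, markedProj M, symGen M, antiGen M]

omit [Fintype n] [DecidableEq n] in
theorem mixerGen_eq_vecMulVec : mixerGen n = I • vecMulVec 1 1 := by
  ext i j; simp [mixerGen]

theorem lie_costGen_mixerGen : ⁅costGen M, mixerGen n⁆ = -antiGen M := by
  simp only [costGen, mixerGen_eq_vecMulVec, antiGen, Ring.lie_def, smul_mul_smul_comm, I_mul_I,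
    diagonal_markVec_mul_vecMulVec, vecMulVec_mul_diagonal_markVec, mul_one, one_mul]
  module

theorem lie_costGen_markedProj : ⁅costGen M, markedProj M⁆ = 0 := by
  simp only [costGen, markedProj, Ring.lie_def, smul_mul_smul_comm, markVec_mul_self,
    diagonal_markVec_mul_vecMulVec, vecMulVec_mul_diagonal_markVec, sub_self]

theorem lie_costGen_symGen : ⁅costGen M, symGen M⁆ = -antiGen M := by
  simp only [costGen, symGen, antiGen, Ring.lie_def, smul_mul_smul_comm, mul_add, add_mul, I_mul_I,
    diagonal_markVec_mul_vecMulVec, vecMulVec_mul_diagonal_markVec, mul_one, one_mul,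
    markVec_mul_self]
  module

theorem lie_costGen_antiGen : ⁅costGen M, antiGen M⁆ = symGen M - (2 : ℝ) • markedProj M := by
  simp only [costGen, symGen, antiGen, markedProj, Ring.lie_def, smul_mul_assoc, mul_smul_comm,
    mul_sub, sub_mul, diagonal_markVec_mul_vecMulVec, vecMulVec_mul_diagonal_markVec, mul_one,
    one_mul, markVec_mul_self]
  module

theorem lie_mixerGen_markedProj : ⁅mixerGen n, markedProj M⁆ = (M.card : ℝ) • antiGen M := by
  simp only [mixerGen_eq_vecMulVec, markedProj, antiGen, Ring.lie_def, smul_mul_smul_comm, I_mul_I,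
    vecMulVec_mul_vecMulVec, markVec_dotProduct_one, one_dotProduct_markVec, vecMulVec_smul]
  module

theorem lie_mixerGen_symGen : ⁅mixerGen n, symGen M⁆ = (Fintype.card n : ℝ) • antiGen M := by
  simp only [mixerGen_eq_vecMulVec, symGen, antiGen, Ring.lie_def, smul_mul_smul_comm, mul_add,
    add_mul, I_mul_I, vecMulVec_mul_vecMulVec, markVec_dotProduct_one, one_dotProduct_markVec,
    one_dotProduct_one, vecMulVec_smul]
  module

theorem lie_mixerGen_antiGen : ⁅mixerGen n, antiGen M⁆ =
    (2 * M.card : ℝ) • mixerGen n - (Fintype.card n : ℝ) • symGen M := by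
  simp only [mixerGen_eq_vecMulVec, symGen, antiGen, Ring.lie_def, smul_mul_assoc, mul_smul_comm,
    mul_sub, sub_mul, vecMulVec_mul_vecMulVec, markVec_dotProduct_one, one_dotProduct_markVec,
    one_dotProduct_one, vecMulVec_smul]
  module

theorem lie_mem_span_searchBasis :
    ∀ x ∈ ({costGen M, mixerGen n} : Set (Matrix n n ℂ)), ∀ y ∈ Set.range (searchBasis M),
      ⁅x, y⁆ ∈ Submodule.span ℝ (Set.range (searchBasis M)) := by
  set V := Submodule.span ℝ (Set.range (searchBasis M))
  have h₁ : mixerGen n ∈ V := Submodule.subset_span ⟨1, rfl⟩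
  have h₂ : markedProj M ∈ V := Submodule.subset_span ⟨2, rfl⟩
  have h₃ : symGen M ∈ V := Submodule.subset_span ⟨3, rfl⟩
  have h₄ : antiGen M ∈ V := Submodule.subset_span ⟨4, rfl⟩
  rintro x hx _ ⟨i, rfl⟩
  rcases hx with rfl | rfl <;> fin_cases i <;>
    simp only [searchBasis, Fin.zero_eta, Fin.mk_one, Fin.reduceFinMk, cons_val, lie_self,
      lie_costGen_mixerGen, lie_costGen_markedProj, lie_costGen_symGen, lie_costGen_antiGen,
      ← lie_skew (mixerGen n) (costGen M), lie_mixerGen_markedProj, lie_mixerGen_symGen,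
      lie_mixerGen_antiGen] <;>
    apply_rules [zero_mem, neg_mem, sub_mem, Submodule.smul_mem]

theorem searchBasis_mem_lieSpan [Nonempty n] (i : Fin 5) :
    searchBasis M i ∈ LieSubalgebra.lieSpan ℝ (Matrix n n ℂ) {costGen M, mixerGen n} := by
  set L := LieSubalgebra.lieSpan ℝ (Matrix n n ℂ) {costGen M, mixerGen n}
  have h₀ : costGen M ∈ L := LieSubalgebra.subset_lieSpan (by simp)
  have h₁ : mixerGen n ∈ L := LieSubalgebra.subset_lieSpan (by simp)
  have h₄ : antiGen M ∈ L := by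
    simpa [lie_costGen_mixerGen] using neg_mem (L.lie_mem h₀ h₁)
  have h₃ : symGen M ∈ L := by
    have hN : (Fintype.card n : ℝ) ≠ 0 := by positivity
    have : symGen M = (Fintype.card n : ℝ)⁻¹ •
        ((2 * M.card : ℝ) • mixerGen n - ⁅mixerGen n, antiGen M⁆) := by
      rw [lie_mixerGen_antiGen, sub_sub_cancel, smul_smul, inv_mul_cancel₀ hN, one_smul]
    rw [this]
    exact L.smul_mem _ (sub_mem (L.smul_mem _ h₁) (L.lie_mem h₁ h₄))
  have h₂ : markedProj M ∈ L := by
    have : markedProj M = (2 : ℝ)⁻¹ • (symGen M - ⁅costGen M, antiGen M⁆) := by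
      rw [lie_costGen_antiGen, sub_sub_cancel, smul_smul, inv_mul_cancel₀ two_ne_zero, one_smul]
    rw [this]
    exact L.smul_mem _ (sub_mem h₃ (L.lie_mem h₀ h₄))
  fin_cases i <;> assumption

theorem linearIndependent_searchBasis (hM : 1 < M.card) (hMn : M.card < Fintype.card n) :
    LinearIndependent ℝ (searchBasis M) := by
  obtain ⟨j₀, hj₀, j₁, hj₁, hj⟩ := Finset.one_lt_card.mp hM
  obtain ⟨k, -, hk⟩ := Finset.exists_mem_notMem_of_card_lt_card (t := Finset.univ)
    (by simpa using hMn)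
  have hjk : j₀ ≠ k := ne_of_mem_of_not_mem hj₀ hk
  rw [Fintype.linearIndependent_iff]
  intro g hg
  have entry (a b : n) := congrFun (congrFun hg a) b
  have e₁ := entry j₀ j₀
  have e₂ := entry j₀ j₁
  have e₃ := entry k k
  have e₄ := entry j₀ k
  simp [Fin.sum_univ_five, searchBasis, costGen, mixerGen, markedProj, symGen, antiGen,
    vecMulVec_apply, markVec, hj₀, hj₁, hk, hj, hjk, Complex.ext_iff] at e₁ e₂ e₃ e₄
  intro i
  fin_cases i <;> simp <;> linarith

end Search

/-- For unstructured search with `1 < |M| < N` marked elements, the Lie algebra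
generated by `i·H_C` (diagonal projector onto the marked set `M`) and `i·H_M`
(all-ones matrix) has dimension exactly 5. -/
theorem qwoa_search_dla_many_marked {N : ℕ} (M : Finset (Fin N))
    (hM1 : 1 < M.card) (hMN : M.card < N) :
    Module.finrank ℝ
      (LieSubalgebra.lieSpan ℝ (Matrix (Fin N) (Fin N) ℂ)
        {Complex.I • Matrix.diagonal (fun i => if i ∈ M then (1 : ℂ) else 0),
         Complex.I • Matrix.of (fun _ _ => (1 : ℂ))}) = 5 := by
  have : Nonempty (Fin N) := ⟨⟨0, by omega⟩⟩
  change Module.finrank ℝ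
    (LieSubalgebra.lieSpan ℝ _ {costGen M, mixerGen (Fin N)}).toSubmodule = 5
  rw [LieSubalgebra.toSubmodule_lieSpan_eq_span (t := Set.range (searchBasis M))
      (fun x hx => ?_) (Set.range_subset_iff.mpr (searchBasis_mem_lieSpan M))
      (lie_mem_span_searchBasis M),
    finrank_span_eq_card (linearIndependent_searchBasis M hM1 (by simpa using hMN)),
    Fintype.card_fin]
  rcases hx with rfl | rfl
  exacts [Submodule.subset_span ⟨0, rfl⟩, Submodule.subset_span ⟨1, rfl⟩]
end

section
/- Let H_1 be the 2×2-block matrix (in block form with respect to a partition into a marked block of size a ≥ 2 and unmarked block of size b ≥ 1) given by H_1 = diag(I_a, 0_b), and H_2 the all-ones matrix. Define H_3 = [H_1,H_2], H_4 = [H_1,H_3], H_5 = [H_2,H_3]. Then {H_1, H_2, H_3, H_4, H_5} is a linearly independent set of matrices. -/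
/-!
Let `p` be the indicator of the marked block, so `H₁ = diagonal p`, and let `J` be the all-ones
matrix. Brackets with these are explicit entrywise: `⁅diagonal p, M⁆ x y = (p x - p y) * M x y`
and `⁅J, M⁆ x y = ∑ k, M k y - ∑ k, M x k`. Hence `H₃`, `H₄`, `H₅` have entries `p x - p y`,
`(p x - p y) ^ 2` and `2 ∑ p - n (p x + p y)`. Take marked `x ≠ y` and unmarked `z`. Only `H₅`
distinguishes the entries `(x, y)` and `(z, z)`, so a vanishing combination has no `H₅`
coefficient. The entries `(x, x)`, `(x, z)` and `(z, x)` then kill the remaining coefficients.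
-/

namespace Matrix

variable {n R : Type*} [Fintype n] [CommRing R]

theorem lie_allOnes_apply (M : Matrix n n R) (x y : n) :
    ⁅(of fun _ _ => 1 : Matrix n n R), M⁆ x y = ∑ k, M k y - ∑ k, M x k := by
  simp [Ring.lie_def, mul_apply]

variable [DecidableEq n]

theorem lie_diagonal_apply (p : n → R) (M : Matrix n n R) (x y : n) :
    ⁅diagonal p, M⁆ x y = (p x - p y) * M x y := by
  rw [Ring.lie_def, sub_apply, diagonal_mul, mul_diagonal]
  ring

theorem lie_allOnes_lie_diagonal_allOnes_apply (p : n → R) (x y : n) :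
    ⁅(of fun _ _ => 1 : Matrix n n R), ⁅diagonal p, of fun _ _ => 1⁆⁆ x y =
      2 * ∑ k, p k - Fintype.card n * (p x + p y) := by
  simp only [lie_allOnes_apply, lie_diagonal_apply, of_apply, mul_one,
    Finset.sum_sub_distrib, Finset.sum_const, Finset.card_univ, nsmul_eq_mul]
  ring

theorem linearIndependent_diagonal_allOnes_lie
    {K : Type*} [Field K] [CharZero K] (p : n → K) {x y z : n} (hxy : x ≠ y)
    (hx : p x = 1) (hy : p y = 1) (hz : p z = 0) :
    let D := diagonal p
    let J : Matrix n n K := of fun _ _ => 1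
    LinearIndependent K ![D, J, ⁅D, J⁆, ⁅D, ⁅D, J⁆⁆, ⁅J, ⁅D, J⁆⁆] := by
  intro D J
  rw [Fintype.linearIndependent_iff]
  intro g hg
  have entry (i j : n) : g 0 * D i j + g 1 + g 2 * (p i - p j) + g 3 * (p i - p j) ^ 2
      + g 4 * (2 * ∑ k, p k - Fintype.card n * (p i + p j)) = 0 := by
    have := congr_fun (congr_fun hg i) j
    simp only [Fin.sum_univ_five, add_apply, smul_apply, zero_apply] at this
    simpa [J, D, lie_diagonal_apply, lie_allOnes_lie_diagonal_allOnes_apply, sq] using this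
  have hxz : x ≠ z := by rintro rfl; simp [hx] at hz
  have e_xx := entry x x
  have e_xy := entry x y
  have e_xz := entry x z
  have e_zx := entry z x
  have e_zz := entry z z
  simp only [D, diagonal_apply_eq, diagonal_apply_ne _ hxy, diagonal_apply_ne _ hxz,
    diagonal_apply_ne _ hxz.symm, hx, hy, hz] at e_xx e_xy e_xz e_zx e_zz
  set S := ∑ k, p k
  set N : K := (Fintype.card n : K)
  have hN : N ≠ 0 := Nat.cast_ne_zero.mpr (Fintype.card_pos_iff.mpr ⟨x⟩).ne'
  have h4 : g 4 = 0 := by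
    have : 2 * N * g 4 = 0 := by linear_combination e_zz - e_xy
    simpa [hN] using this
  have h1 : g 1 = 0 := by linear_combination e_zz - 2 * S * h4
  have h0 : g 0 = 0 := by linear_combination e_xx - e_xy
  have h2 : g 2 = 0 := by linear_combination (e_xz - e_zx) / 2
  have h3 : g 3 = 0 := by linear_combination (e_xz + e_zx) / 2 - h1 - (2 * S - N) * h4
  intro i
  fin_cases i <;> assumption

end Matrix

/-- With `H₁ = diag(I_a, 0_b)` (`a ≥ 2`, `b ≥ 1`), `H₂` the all-ones matrix,
`H₃ = [H₁,H₂]`, `H₄ = [H₁,H₃]`, `H₅ = [H₂,H₃]`, the set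
`{H₁, H₂, H₃, H₄, H₅}` is linearly independent. -/
theorem search_generators_linearIndependent {a b : ℕ} (ha : 2 ≤ a) (hb : 1 ≤ b) :
    let H1 : Matrix (Fin (a + b)) (Fin (a + b)) ℝ :=
      Matrix.of fun i j => if i = j ∧ (i : ℕ) < a then 1 else 0
    let H2 : Matrix (Fin (a + b)) (Fin (a + b)) ℝ := Matrix.of fun _ _ => 1
    let H3 := H1 * H2 - H2 * H1
    let H4 := H1 * H3 - H3 * H1
    let H5 := H2 * H3 - H3 * H2
    LinearIndependent ℝ ![H1, H2, H3, H4, H5] := by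
  intro H1 H2 H3 H4 H5
  let p : Fin (a + b) → ℝ := fun i => if (i : ℕ) < a then 1 else 0
  have hH1 : H1 = Matrix.diagonal p := by
    ext i j
    by_cases hij : i = j <;> simp [H1, p, hij]
  have key := Matrix.linearIndependent_diagonal_allOnes_lie p
    (x := ⟨0, by omega⟩) (y := ⟨1, by omega⟩) (z := ⟨a, by omega⟩)
    (by simp) (by simp [p]; omega) (by simp [p]; omega) (by simp [p])
  simpa only [H3, H4, H5, hH1, Ring.lie_def] using key
end
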